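/- arXiv:2502.02488 — 2 statements merged into one kernel-verified Lean document; each statement's English description precedes it below -/
import Mathlib

section
/- Let S be a graph on vertex set {1,…,k} with edge set E(S) and distinguished vertices c, d ∈ {1,…,k}, with k ≤ n, and let Q̃_{(c,d),S} : ℝ^{n×n} → ℝ^{n×n} be the equivariant graph polynomial basis. Then Q̃_{(c,d),S} is permutation-equivariant: for every A ∈ ℝ^{n×n}, every permutation π of {1,…,n}, and all i, j ∈ {1,…,n}, Q̃_{(c,d),S}(π·A)_{π(i)π(j)} = Q̃_{(c,d),S}(A)_{ij}, where (π·A)_{π(u)π(v)} = A_{uv}. -/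
open scoped BigOperators

/-- The action of a permutation `π` on a matrix, characterized by
`(π · A) (π u) (π v) = A u v`. -/
def permMat {n : ℕ} (π : Equiv.Perm (Fin n)) (A : Matrix (Fin n) (Fin n) ℝ) :
    Matrix (Fin n) (Fin n) ℝ :=
  fun u v => A (π.symm u) (π.symm v)

/-- The equivariant graph polynomial basis `Q̃_{(c,d),S}` for a graph on vertex set
`Fin k` with edge set `E` and distinguished vertices `c, d`:
`Q̃_{(c,d),S}(A)_{ij} = (1/n!) ∑_{j₁ ≠ ⋯ ≠ j_k, j_c = i, j_d = j} ∏_{(a,b) ∈ E} A_{j_a j_b}`,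
the sum being over tuples of pairwise distinct indices (injections `Fin k ↪ Fin n`)
sending `c` to `i` and `d` to `j`. -/
noncomputable def Qtilde {n k : ℕ} (E : Finset (Fin k × Fin k)) (c d : Fin k)
    (A : Matrix (Fin n) (Fin n) ℝ) : Matrix (Fin n) (Fin n) ℝ :=
  fun i j => ((Nat.factorial n : ℝ))⁻¹ *
    ∑ φ ∈ Finset.univ.filter (fun φ : Fin k ↪ Fin n => φ c = i ∧ φ d = j),
      ∏ e ∈ E, A (φ e.1) (φ e.2)

theorem statement12 (n k : ℕ) (hkn : k ≤ n) (E : Finset (Fin k × Fin k)) (c d : Fin k) :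
    ∀ (A : Matrix (Fin n) (Fin n) ℝ) (π : Equiv.Perm (Fin n)) (i j : Fin n),
      Qtilde E c d (permMat π A) (π i) (π j) = Qtilde E c d A i j := by
  intro A π i j
  unfold Qtilde
  congr 1
  apply Finset.sum_nbij' (i := fun φ => φ.trans π.symm.toEmbedding)
    (j := fun φ => φ.trans π.toEmbedding)
  · intro φ hφ
    simp only [Finset.mem_filter, Finset.mem_univ, true_and] at hφ ⊢
    simp [Function.Embedding.trans_apply, hφ.1, hφ.2]
  · intro φ hφ
    simp only [Finset.mem_filter, Finset.mem_univ, true_and] at hφ ⊢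
    simp [Function.Embedding.trans_apply, hφ.1, hφ.2]
  · intro φ _; ext x; simp
  · intro φ _; ext x; simp
  · intro φ _
    apply Finset.prod_congr rfl
    intro e _
    simp [permMat]
end

section
/- Let p₀ be a finitely supported probability distribution on the set of symmetric matrices A₀ ∈ {0,1}^{n×n} with zero diagonal, and suppose every A₀ in the support satisfies ‖A₀‖_F² = c for a fixed constant c (e.g., all graphs have the same number of edges). Let α ∈ ℝ, β > 0, Z > 0, and define p_t(X) = Z · E_{A₀∼p₀}[exp(−‖X − α·A₀‖_F²/(2β²))]. Then for every X ∈ ℝ^{n×n} and all i, j ∈ {1,…,n}: (∇ log p_t(X))_{ij} = −(1/β²)·X_{ij} + (α/β²)·F(X)_{ij}/G(X), where F(X)_{ij} = Σ_{k=0}^∞ (α^k/(β^{2k}·k!)) · Σ_{a ∈ ({1,…,n}²)^k} E_{A₀∼p₀}[(A₀)_{ij} · Π_{l=1}^k (A₀)_{a_l}] · Π_{l=1}^k X_{a_l} and G(X) = Σ_{k=0}^∞ (α^k/(β^{2k}·k!)) · Σ_{a ∈ ({1,…,n}²)^k} E_{A₀∼p₀}[Π_{l=1}^k (A₀)_{a_l}]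 · Π_{l=1}^k X_{a_l}; moreover both series converge absolutely and G(X) > 0. (Here the inner sums are over k-tuples a = (a_1,…,a_k) of index pairs a_l ∈ {1,…,n}×{1,…,n}, and each monomial coefficient E_{A₀∼p₀}[Π_l (A₀)_{a_l}] is, up to the factor n!/|Aut|, the expected invariant graph polynomial basis value — i.e., the expected subgraph count — of the multigraph determined by the tuple a.) -/
open scoped BigOperators

attribute [local instance] Matrix.frobeniusNormedAddCommGroup Matrix.frobeniusNormedSpace

/-- The squared Frobenius norm of a real matrix. -/
noncomputable def frobSq {n : ℕ} (X : Matrix (Fin n) (Fin n) ℝ) : ℝ :=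
  ∑ u, ∑ v, (X u v) ^ 2

/-- The `k`-th term of the series defining the numerator `F(X)_{ij}` of the nonlinear
part of the score function: `(α^k/(β^{2k} k!)) ∑_{a ∈ ([n]²)^k}
E_{A₀ ∼ p₀}[(A₀)_{ij} ∏_l (A₀)_{a_l}] ∏_l X_{a_l}`. -/
noncomputable def Fterm {n : ℕ} (p₀ : Matrix (Fin n) (Fin n) ℝ →₀ ℝ) (α β : ℝ)
    (X : Matrix (Fin n) (Fin n) ℝ) (i j : Fin n) (k : ℕ) : ℝ :=
  (α ^ k / (β ^ (2 * k) * (Nat.factorial k : ℝ))) *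
    ∑ a : Fin k → Fin n × Fin n,
      (∑ A ∈ p₀.support, p₀ A * (A i j * ∏ l, A (a l).1 (a l).2)) *
        ∏ l, X (a l).1 (a l).2

/-- The `k`-th term of the series defining the denominator `G(X)` of the nonlinear
part of the score function: `(α^k/(β^{2k} k!)) ∑_{a ∈ ([n]²)^k}
E_{A₀ ∼ p₀}[∏_l (A₀)_{a_l}] ∏_l X_{a_l}`. -/
noncomputable def Gterm {n : ℕ} (p₀ : Matrix (Fin n) (Fin n) ℝ →₀ ℝ) (α β : ℝ)
    (X : Matrix (Fin n) (Fin n) ℝ) (k : ℕ) : ℝ :=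
  (α ^ k / (β ^ (2 * k) * (Nat.factorial k : ℝ))) *
    ∑ a : Fin k → Fin n × Fin n,
      (∑ A ∈ p₀.support, p₀ A * ∏ l, A (a l).1 (a l).2) *
        ∏ l, X (a l).1 (a l).2

/-- Evaluation of a matrix entry as a continuous linear map. -/
noncomputable def entryCLM (n : ℕ) (u v : Fin n) : Matrix (Fin n) (Fin n) ℝ →L[ℝ] ℝ :=
  LinearMap.toContinuousLinearMap
    ((LinearMap.proj v : (Fin n → ℝ) →ₗ[ℝ] ℝ).comp
      (LinearMap.proj u : (Fin n → Fin n → ℝ) →ₗ[ℝ] (Fin n → ℝ)))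

lemma entryCLM_apply (n : ℕ) (u v : Fin n) (M : Matrix (Fin n) (Fin n) ℝ) :
    entryCLM n u v M = M u v := rfl

lemma exp_eq_tsum_pow_div (x : ℝ) : Real.exp x = ∑' k : ℕ, x ^ k / (Nat.factorial k : ℝ) := by
  rw [Real.exp_eq_exp_ℝ, NormedSpace.exp_eq_tsum_div]

theorem statement15 (n : ℕ) (p₀ : Matrix (Fin n) (Fin n) ℝ →₀ ℝ)
    (hnonneg : ∀ A, 0 ≤ p₀ A) (hsum : ∑ A ∈ p₀.support, p₀ A = 1)
    (c : ℝ)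
    (hsupp : ∀ A ∈ p₀.support,
      (∀ u v, A u v = 0 ∨ A u v = 1) ∧ A.IsSymm ∧ (∀ u, A u u = 0) ∧ frobSq A = c)
    (α β Z : ℝ) (hβ : 0 < β) (hZ : 0 < Z)
    (pt : Matrix (Fin n) (Fin n) ℝ → ℝ)
    (hpt : pt = fun X => Z * ∑ A ∈ p₀.support,
      p₀ A * Real.exp (-(frobSq (X - α • A)) / (2 * β ^ 2))) :
    ∀ (X : Matrix (Fin n) (Fin n) ℝ) (i j : Fin n),
      Summable (fun k : ℕ => |Fterm p₀ α β X i j k|) ∧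
      Summable (fun k : ℕ => |Gterm p₀ α β X k|) ∧
      0 < ∑' k : ℕ, Gterm p₀ α β X k ∧
      fderiv ℝ (fun Y => Real.log (pt Y)) X (Matrix.single i j 1) =
        -(1 / β ^ 2) * X i j +
          (α / β ^ 2) * (∑' k : ℕ, Fterm p₀ α β X i j k) / (∑' k : ℕ, Gterm p₀ α β X k) := by
  intro X i j
  subst hpt
  set s := p₀.support with hs
  -- the "inner product" and exponent
  set t : Matrix (Fin n) (Fin n) ℝ → ℝ :=
    fun A => (α / β ^ 2) * ∑ p : Fin n × Fin n, A p.1 p.2 * X p.1 p.2 with ht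
  have hfac : ∀ k : ℕ, (Nat.factorial k : ℝ) ≠ 0 :=
    fun k => Nat.cast_ne_zero.mpr k.factorial_ne_zero
  -- rewriting of Gterm and Fterm
  have hG : ∀ k, Gterm p₀ α β X k
      = ∑ A ∈ s, p₀ A * (t A ^ k / (Nat.factorial k : ℝ)) := by
    intro k
    unfold Gterm
    simp only [Finset.sum_mul]
    rw [Finset.sum_comm, Finset.mul_sum]
    refine Finset.sum_congr rfl fun A _ => ?_
    simp only [mul_assoc, ← Finset.prod_mul_distrib, ← Finset.mul_sum]
    rw [ht]
    rw [mul_pow, div_pow, pow_mul]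
    have h : ((β:ℝ) ^ 2) ^ k ≠ 0 := by positivity
    field_simp
    rw [Fintype.sum_pow]
  have hF : ∀ k, Fterm p₀ α β X i j k
      = ∑ A ∈ s, p₀ A * (A i j * (t A ^ k / (Nat.factorial k : ℝ))) := by
    intro k
    unfold Fterm
    simp only [Finset.sum_mul]
    rw [Finset.sum_comm, Finset.mul_sum]
    refine Finset.sum_congr rfl fun A _ => ?_
    simp only [mul_assoc, ← Finset.prod_mul_distrib, ← Finset.mul_sum]
    rw [ht]
    rw [mul_pow, div_pow, pow_mul]
    have h : ((β:ℝ) ^ 2) ^ k ≠ 0 := by positivity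
    field_simp
    rw [Fintype.sum_pow]
  -- summability of the dominating series
  have hdom : Summable (fun k : ℕ => ∑ A ∈ s, p₀ A * (|t A| ^ k / (Nat.factorial k : ℝ))) := by
    refine summable_sum fun A _ => ?_
    exact (Real.summable_pow_div_factorial (|t A|)).mul_left _
  have habs : ∀ A ∈ s, |A i j| ≤ 1 := by
    intro A hA
    rcases (hsupp A hA).1 i j with h | h <;> rw [h] <;> norm_num
  have hGabs : Summable (fun k : ℕ => |Gterm p₀ α β X k|) := by
    refine Summable.of_nonneg_of_le (fun k => abs_nonneg _) (fun k => ?_) hdom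
    rw [hG k]
    refine (Finset.abs_sum_le_sum_abs _ _).trans ?_
    refine Finset.sum_le_sum fun A hA => ?_
    rw [abs_mul, abs_of_nonneg (hnonneg A), abs_div, abs_pow,
      abs_of_nonneg (by positivity : (0:ℝ) ≤ (Nat.factorial k : ℝ))]
  have hFabs : Summable (fun k : ℕ => |Fterm p₀ α β X i j k|) := by
    refine Summable.of_nonneg_of_le (fun k => abs_nonneg _) (fun k => ?_) hdom
    rw [hF k]
    refine (Finset.abs_sum_le_sum_abs _ _).trans ?_
    refine Finset.sum_le_sum fun A hA => ?_
    rw [abs_mul, abs_of_nonneg (hnonneg A), abs_mul, abs_div, abs_pow,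
      abs_of_nonneg (by positivity : (0:ℝ) ≤ (Nat.factorial k : ℝ))]
    have h1 : |A i j| * (|t A| ^ k / (Nat.factorial k : ℝ))
        ≤ 1 * (|t A| ^ k / (Nat.factorial k : ℝ)) := by
      refine mul_le_mul_of_nonneg_right (habs A hA) (by positivity)
    nlinarith [hnonneg A, h1, mul_le_mul_of_nonneg_left h1 (hnonneg A)]
  -- tsum values
  have hGsummand : ∀ A ∈ s, Summable (fun k : ℕ => p₀ A * (t A ^ k / (Nat.factorial k : ℝ))) :=
    fun A _ => (Real.summable_pow_div_factorial (t A)).mul_left _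
  have hFsummand : ∀ A ∈ s,
      Summable (fun k : ℕ => p₀ A * (A i j * (t A ^ k / (Nat.factorial k : ℝ)))) :=
    fun A _ => ((Real.summable_pow_div_factorial (t A)).mul_left _).mul_left _
  have htsumG : ∑' k : ℕ, Gterm p₀ α β X k = ∑ A ∈ s, p₀ A * Real.exp (t A) := by
    calc ∑' k : ℕ, Gterm p₀ α β X k
        = ∑' k : ℕ, ∑ A ∈ s, p₀ A * (t A ^ k / (Nat.factorial k : ℝ)) := by
          exact tsum_congr hG
      _ = ∑ A ∈ s, ∑' k : ℕ, p₀ A * (t A ^ k / (Nat.factorial k : ℝ)) := Summable.tsum_finsetSum hGsummand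
      _ = ∑ A ∈ s, p₀ A * Real.exp (t A) := by
          refine Finset.sum_congr rfl fun A _ => ?_
          rw [tsum_mul_left, ← exp_eq_tsum_pow_div]
  have htsumF : ∑' k : ℕ, Fterm p₀ α β X i j k
      = ∑ A ∈ s, p₀ A * (A i j * Real.exp (t A)) := by
    calc ∑' k : ℕ, Fterm p₀ α β X i j k
        = ∑' k : ℕ, ∑ A ∈ s, p₀ A * (A i j * (t A ^ k / (Nat.factorial k : ℝ))) := by
          exact tsum_congr hF
      _ = ∑ A ∈ s, ∑' k : ℕ, p₀ A * (A i j * (t A ^ k / (Nat.factorial k : ℝ))) :=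
          Summable.tsum_finsetSum hFsummand
      _ = ∑ A ∈ s, p₀ A * (A i j * Real.exp (t A)) := by
          refine Finset.sum_congr rfl fun A _ => ?_
          rw [tsum_mul_left, tsum_mul_left, ← exp_eq_tsum_pow_div]
  -- support is nonempty and the denominator is positive
  have hsne : s.Nonempty := by
    rcases Finset.eq_empty_or_nonempty s with h | h
    · rw [h] at hsum; simp at hsum
    · exact h
  have hppos : ∀ A ∈ s, 0 < p₀ A := by
    intro A hA
    exact lt_of_le_of_ne (hnonneg A) (Ne.symm (Finsupp.mem_support_iff.mp hA))
  have hGGpos : 0 < ∑ A ∈ s, p₀ A * Real.exp (t A) := by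
    obtain ⟨A₀, hA₀⟩ := hsne
    refine Finset.sum_pos' (fun A hA => mul_nonneg (hnonneg A) (Real.exp_pos _).le)
      ⟨A₀, hA₀, mul_pos (hppos A₀ hA₀) (Real.exp_pos _)⟩
  refine ⟨hFabs, hGabs, by rw [htsumG]; exact hGGpos, ?_⟩
  -- the derivative computation
  have hβ2 : (2 * β ^ 2 : ℝ) ≠ 0 := by positivity
  set DA : Matrix (Fin n) (Fin n) ℝ → (Matrix (Fin n) (Fin n) ℝ →L[ℝ] ℝ) :=
    fun A => ∑ u, ∑ v, ((2:ℝ) * (X u v - α * A u v)) • entryCLM n u v with hDA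
  have hD : ∀ A : Matrix (Fin n) (Fin n) ℝ, HasFDerivAt
      (fun Y : Matrix (Fin n) (Fin n) ℝ => -(frobSq (Y - α • A)) / (2 * β ^ 2))
      ((-(1/(2*β^2))) • DA A) X := by
    intro A
    have hfun : (fun Y : Matrix (Fin n) (Fin n) ℝ => -(frobSq (Y - α • A)) / (2 * β ^ 2))
        = fun Y => (-(1/(2*β^2))) * ∑ u, ∑ v, (Y u v - α * A u v)^2 := by
      funext Y
      simp only [frobSq, Matrix.sub_apply, Matrix.smul_apply, smul_eq_mul]
      ring
    rw [hfun, hDA]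
    refine HasFDerivAt.const_mul ?_ _
    refine HasFDerivAt.fun_sum fun u _ => ?_
    refine HasFDerivAt.fun_sum fun v _ => ?_
    have h1 : HasFDerivAt (fun Y : Matrix (Fin n) (Fin n) ℝ => Y u v) (entryCLM n u v) X :=
      (entryCLM n u v).hasFDerivAt
    have h2 := (hasDerivAt_pow 2 (X u v - α * A u v)).comp_hasFDerivAt X
      (h1.sub_const (α * A u v))
    convert h2 using 2
    norm_num
    exact Iff.rfl
  have hpt' : HasFDerivAt
      (fun Y => Z * ∑ A ∈ s, p₀ A * Real.exp (-(frobSq (Y - α • A)) / (2 * β ^ 2)))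
      (Z • ∑ A ∈ s, p₀ A • (Real.exp (-(frobSq (X - α • A)) / (2 * β ^ 2)) •
        ((-(1/(2*β^2))) • DA A))) X :=
    HasFDerivAt.const_mul (HasFDerivAt.fun_sum fun A _ => ((hD A).exp.const_mul (p₀ A))) Z
  have hSpos : 0 < ∑ A ∈ s, p₀ A * Real.exp (-(frobSq (X - α • A)) / (2 * β ^ 2)) := by
    obtain ⟨A₀, hA₀⟩ := hsne
    refine Finset.sum_pos' (fun A hA => mul_nonneg (hnonneg A) (Real.exp_pos _).le)
      ⟨A₀, hA₀, mul_pos (hppos A₀ hA₀) (Real.exp_pos _)⟩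
  have hptXpos : (0:ℝ) < Z * ∑ A ∈ s, p₀ A * Real.exp (-(frobSq (X - α • A)) / (2 * β ^ 2)) :=
    mul_pos hZ hSpos
  have hlog := hpt'.log hptXpos.ne'
  beta_reduce
  have hlog' : HasFDerivAt
      (fun Y => Real.log (Z * ∑ A ∈ s, p₀ A * Real.exp (-(frobSq (Y - α • A)) / (2 * β ^ 2))))
      ((Z * ∑ A ∈ s, p₀ A * Real.exp (-(frobSq (X - α • A)) / (2 * β ^ 2)))⁻¹ •
        (Z • ∑ A ∈ s, p₀ A • (Real.exp (-(frobSq (X - α • A)) / (2 * β ^ 2)) •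
          ((-(1/(2*β^2))) • DA A)))) X := hlog
  rw [hlog'.fderiv]
  simp only [ContinuousLinearMap.smul_apply, ContinuousLinearMap.coe_sum', Finset.sum_apply,
    ContinuousLinearMap.sum_apply, smul_eq_mul, entryCLM_apply, hDA]
  have hsum1 : ∀ A : Matrix (Fin n) (Fin n) ℝ,
      (∑ u : Fin n, ∑ v : Fin n,
        2 * (X u v - α * A u v) * Matrix.single i j (1:ℝ) u v)
      = 2 * (X i j - α * A i j) := by
    intro A
    simp [Matrix.single, mul_ite, ite_and, Finset.sum_ite_eq]
  simp only [hsum1]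
  set C := Real.exp (-(frobSq X + α ^ 2 * c) / (2 * β ^ 2)) with hC
  have hip : ∀ A : Matrix (Fin n) (Fin n) ℝ,
      (∑ p : Fin n × Fin n, A p.1 p.2 * X p.1 p.2) = ∑ u, ∑ v, A u v * X u v := by
    intro A; rw [Fintype.sum_prod_type]
  have hfrobdec : ∀ A ∈ s, -frobSq (X - α • A) / (2 * β ^ 2)
      = -(frobSq X + α ^ 2 * c) / (2 * β ^ 2) + t A := by
    intro A hA
    have hc := (hsupp A hA).2.2.2
    have hdec : frobSq (X - α • A)
        = frobSq X - 2 * α * (∑ u, ∑ v, A u v * X u v) + α ^ 2 * frobSq A := by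
      simp only [frobSq, Matrix.sub_apply, Matrix.smul_apply, smul_eq_mul, Finset.mul_sum,
        ← Finset.sum_add_distrib, ← Finset.sum_sub_distrib]
      exact Finset.sum_congr rfl fun u _ => Finset.sum_congr rfl fun v _ => by ring
    rw [hdec, hc, ht]
    simp only
    rw [hip A]
    field_simp
    ring
  have hEA : ∀ A ∈ s, Real.exp (-frobSq (X - α • A) / (2 * β ^ 2)) = C * Real.exp (t A) := by
    intro A hA
    rw [hfrobdec A hA, Real.exp_add, hC]
  have hS : ∑ A ∈ s, p₀ A * Real.exp (-frobSq (X - α • A) / (2 * β ^ 2))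
      = C * ∑ A ∈ s, p₀ A * Real.exp (t A) := by
    rw [Finset.mul_sum]
    exact Finset.sum_congr rfl fun A hA => by rw [hEA A hA]; ring
  have hT : ∑ A ∈ s, p₀ A * (Real.exp (-frobSq (X - α • A) / (2 * β ^ 2)) *
        (-(1 / (2 * β ^ 2)) * (2 * (X i j - α * A i j))))
      = C * ((-(1 / β ^ 2) * X i j) * (∑ A ∈ s, p₀ A * Real.exp (t A))
          + (α / β ^ 2) * (∑ A ∈ s, p₀ A * (A i j * Real.exp (t A)))) := by
    have h1 : ∑ A ∈ s, p₀ A * (Real.exp (-frobSq (X - α • A) / (2 * β ^ 2)) *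
          (-(1 / (2 * β ^ 2)) * (2 * (X i j - α * A i j))))
        = ∑ A ∈ s, C * ((-(1 / β ^ 2) * X i j) * (p₀ A * Real.exp (t A))
            + (α / β ^ 2) * (p₀ A * (A i j * Real.exp (t A)))) := by
      refine Finset.sum_congr rfl fun A hA => ?_
      rw [hEA A hA]
      field_simp
      ring
    rw [h1, ← Finset.mul_sum, Finset.sum_add_distrib, ← Finset.mul_sum, ← Finset.mul_sum]
  rw [hT, hS, htsumF, htsumG]
  have hGGne : (∑ A ∈ s, p₀ A * Real.exp (t A)) ≠ 0 := hGGpos.ne'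
  have hCpos : 0 < C := Real.exp_pos _
  field_simp
end
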